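/- arXiv:1807.02191 — 6 statements merged into one kernel-verified Lean document; each statement's English description precedes it below -/
import Mathlib

section
/- Suppose that the map (h, θ) ↦ f_h(θ) is continuous in h for P-almost all θ ∈ Θ, that the function θ ↦ sup_{h∈H} |f_h(θ)| is measurable, and that ∫ sup_{h∈H} |f_h| dP < ∞. Then sup_{h∈H} |B_n(h) − B(h)| → 0 almost surely as n → ∞. -/
/-!
Off a measurable `P`-null set, `θ ↦ (h ↦ f_h(θ))` is a random element of the separable Banach
space `C(H, ℝ)`; redefining it as `0` on that null set changes neither `B` nor, almost surely,
any `B_n`. Its norm is `sup_h |f_h(θ)|`, so it is integrable, and the theorem is the strong law of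
large numbers in `C(H, ℝ)`: the sup norm of the centred empirical mean is `sup_h |B_n(h) - B(h)|`.
-/

open MeasureTheory ProbabilityTheory Filter Topology
open TopologicalSpace Set Metric Finset

section Measurability

variable {α : Type*} [MeasurableSpace α]

theorem measurable_of_forall_measurable_dist {β : Type*} [PseudoMetricSpace β]
    [SecondCountableTopology β] [MeasurableSpace β] [BorelSpace β] {g : α → β}
    (hg : ∀ c, Measurable fun a => dist (g a) c) : Measurable g := by
  have hbasis : IsTopologicalBasis {s : Set β | ∃ c r, s = ball c r} := by
    refine isTopologicalBasis_of_isOpen_of_nhds (by rintro _ ⟨c, r, rfl⟩; exact isOpen_ball) ?_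
    intro a U ha hU
    obtain ⟨ε, hε, hεU⟩ := Metric.isOpen_iff.1 hU a ha
    exact ⟨ball a ε, ⟨a, ε, rfl⟩, mem_ball_self hε, hεU⟩
  rw [‹BorelSpace β›.measurable_eq, hbasis.borel_eq_generateFrom]
  refine measurable_generateFrom ?_
  rintro _ ⟨c, r, rfl⟩
  exact measurableSet_lt (hg c) measurable_const

theorem ContinuousMap.measurable_of_forall_measurable_apply {X E : Type*} [TopologicalSpace X]
    [CompactSpace X] [SeparableSpace X] [NormedAddCommGroup E] [MeasurableSpace E]
    [BorelSpace E] [SecondCountableTopology C(X, E)] [MeasurableSpace C(X, E)]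
    [BorelSpace C(X, E)] {g : α → C(X, E)}
    (hg : ∀ x, Measurable fun a => g a x) : Measurable g := by
  obtain ⟨S, hS_count, hS_dense⟩ := exists_countable_dense X
  have := hS_count.to_subtype
  refine measurable_of_forall_measurable_dist fun c => ?_
  have hdist : ∀ a, dist (g a) c = ⨆ s : S, ‖g a s - c s‖ := fun a => by
    rw [dist_eq_norm, ContinuousMap.norm_eq_iSup_norm,
      ← hS_dense.ciSup' (f := fun x => ‖(g a - c) x‖) (by fun_prop)]
    rfl
  simp_rw [hdist]
  exact Measurable.iSup fun s => (continuous_sub_right (c s)).norm.measurable.comp (hg s)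

end Measurability

section StrongLaw

variable {Θ Ω : Type*} [MeasurableSpace Θ] [MeasurableSpace Ω] {P : Measure Θ} {μ : Measure Ω}
  {Y : ℕ → Ω → Θ}

theorem strong_law_ae_comp {E : Type*} [NormedAddCommGroup E] [NormedSpace ℝ E] [CompleteSpace E]
    [MeasurableSpace E] [BorelSpace E] [SecondCountableTopology E] (hY_meas : ∀ i, Measurable (Y i))
    (hY_indep : Pairwise fun i j => IndepFun (Y i) (Y j) μ) (hY_law : ∀ i, μ.map (Y i) = P)
    {g : Θ → E} (hg : Measurable g) (hg_int : Integrable g P) :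
    ∀ᵐ ω ∂μ, Tendsto (fun n : ℕ => (n : ℝ)⁻¹ • ∑ i ∈ range n, g (Y i ω)) atTop
      (𝓝 (∫ θ, g θ ∂P)) := by
  have hident : ∀ i, IdentDistrib (Y i) (Y 0) μ μ := fun i =>
    ⟨(hY_meas i).aemeasurable, (hY_meas 0).aemeasurable, by rw [hY_law i, hY_law 0]⟩
  rw [← hY_law 0] at hg_int ⊢
  rw [integral_map (hY_meas 0).aemeasurable hg.aestronglyMeasurable]
  exact strong_law_ae (fun i => g ∘ Y i)
    ((integrable_map_measure hg.aestronglyMeasurable (hY_meas 0).aemeasurable).1 hg_int)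
    (fun i j hij => (hY_indep hij).comp hg hg) fun i => (hident i).comp hg

theorem ae_tendsto_iSup_abs_average_sub_integral {X : Type*} [TopologicalSpace X]
    [CompactSpace X] [LocallyCompactSpace X] [SecondCountableTopology X]
    (hY_meas : ∀ i, Measurable (Y i))
    (hY_indep : Pairwise fun i j => IndepFun (Y i) (Y j) μ) (hY_law : ∀ i, μ.map (Y i) = P)
    {f : X → Θ → ℝ} (hf_meas : ∀ x, Measurable (f x)) (hf_cont : ∀ θ, Continuous (f · θ))
    (hf_int : Integrable (fun θ => ⨆ x, |f x θ|) P) :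
    ∀ᵐ ω ∂μ, Tendsto (fun n : ℕ =>
      ⨆ x, |(n : ℝ)⁻¹ * ∑ i ∈ range n, f x (Y i ω) - ∫ θ, f x θ ∂P|) atTop (𝓝 0) := by
  borelize C(X, ℝ)
  let U : Θ → C(X, ℝ) := fun θ => ⟨(f · θ), hf_cont θ⟩
  have hU_meas : Measurable U := ContinuousMap.measurable_of_forall_measurable_apply hf_meas
  have hU_int : Integrable U P := hf_int.mono' hU_meas.aestronglyMeasurable
    (ae_of_all _ fun θ => (ContinuousMap.norm_eq_iSup_norm (U θ)).le)
  filter_upwards [strong_law_ae_comp hY_meas hY_indep hY_law hU_meas hU_int] with ω hω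
  convert tendsto_iff_norm_sub_tendsto_zero.1 hω with n
  rw [ContinuousMap.norm_eq_iSup_norm]
  congr! 2 with x
  simp [U, ContinuousMap.integral_apply hU_int]

end StrongLaw

theorem stmt1_general {d k : ℕ}
    (Θ : Set (EuclideanSpace ℝ (Fin d)))
    (P : Measure Θ)
    (H : Set (EuclideanSpace ℝ (Fin k))) (hH : IsCompact H)
    (f : EuclideanSpace ℝ (Fin k) → Θ → ℝ)
    (hf_meas : ∀ h ∈ H, Measurable (f h))
    (hf_cont : ∀ᵐ θ ∂P, ContinuousOn (fun h => f h θ) H)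
    (hsup_int : Integrable (fun θ => ⨆ h : H, |f (h : EuclideanSpace ℝ (Fin k)) θ|) P)
    {Ω : Type*} [MeasurableSpace Ω] (μ : Measure Ω)
    (X : ℕ → Ω → Θ) (hX_meas : ∀ i, Measurable (X i))
    (hX_indep : iIndepFun X μ)
    (hX_law : ∀ i, Measure.map (X i) μ = P) :
    ∀ᵐ ω ∂μ, Tendsto (fun n : ℕ =>
        ⨆ h : H, |(1 / n : ℝ) * ∑ i ∈ Finset.range n, f (h : EuclideanSpace ℝ (Fin k)) (X i ω)
          - ∫ θ, f (h : EuclideanSpace ℝ (Fin k)) θ ∂P|)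
      atTop (𝓝 0) := by
  have : CompactSpace H := isCompact_iff_compactSpace.1 hH
  obtain ⟨G, hG_ae, hG_meas, hG_cont⟩ := hf_cont.exists_measurable_mem
  let g : H → Θ → ℝ := fun h => G.indicator (f h)
  have hg_eq : ∀ h, ∀ θ ∈ G, g h θ = f h θ := fun h θ hθ => indicator_of_mem hθ _
  have hg_cont : ∀ θ, Continuous (g · θ) := by
    intro θ
    by_cases hθ : θ ∈ G
    · simp only [g, indicator_of_mem hθ]
      exact (hG_cont θ hθ).domRestrict
    · simpa only [g, indicator_of_notMem hθ] using continuous_const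
  have hg_int : Integrable (fun θ => ⨆ h : H, |g h θ|) P := by
    refine hsup_int.congr ?_
    filter_upwards [hG_ae] with θ hθ
    simp only [hg_eq _ θ hθ]
  have hX_G : ∀ᵐ ω ∂μ, ∀ i, X i ω ∈ G := ae_all_iff.2 fun i =>
    ae_of_ae_map (hX_meas i).aemeasurable (by rwa [hX_law i])
  have hB : ∀ h : H, ∫ θ, g h θ ∂P = ∫ θ, f h θ ∂P := fun h =>
    integral_congr_ae (by filter_upwards [hG_ae] with θ hθ using hg_eq h θ hθ)
  have hg_meas : ∀ h, Measurable (g h) := fun h => (hf_meas h h.2).indicator hG_meas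
  filter_upwards [ae_tendsto_iSup_abs_average_sub_integral hX_meas
    (fun i j hij => hX_indep.indepFun hij) hX_law hg_meas hg_cont hg_int, hX_G] with ω hω hωG
  simpa only [one_div, hB, hg_eq _ _ (hωG _)] using hω

/-- Glivenko–Cantelli, iid case.  If `(h, θ) ↦ f h θ` is continuous in `h` for
`P`-almost all `θ`, `θ ↦ ⨆_{h ∈ H} |f h θ|` is measurable with finite integral, and
`θ₁, θ₂, …` are iid with law `P`, then `sup_{h ∈ H} |Bₙ(h) − B(h)| → 0` almost surely. -/
theorem stmt1 {d k : ℕ}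
    (Θ : Set (EuclideanSpace ℝ (Fin d))) (hΘ : MeasurableSet Θ)
    (P : Measure Θ) [IsProbabilityMeasure P]
    (H : Set (EuclideanSpace ℝ (Fin k))) (hH : IsCompact H)
    (f : EuclideanSpace ℝ (Fin k) → Θ → ℝ)
    (hf_meas : ∀ h ∈ H, Measurable (f h))
    (hf_cont : ∀ᵐ θ ∂P, ContinuousOn (fun h => f h θ) H)
    (hsup_meas : Measurable (fun θ => ⨆ h : H, |f (h : EuclideanSpace ℝ (Fin k)) θ|))
    (hsup_int : Integrable (fun θ => ⨆ h : H, |f (h : EuclideanSpace ℝ (Fin k)) θ|) P)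
    {Ω : Type*} [MeasurableSpace Ω] (μ : Measure Ω) [IsProbabilityMeasure μ]
    (X : ℕ → Ω → Θ) (hX_meas : ∀ i, Measurable (X i))
    (hX_indep : iIndepFun X μ)
    (hX_law : ∀ i, Measure.map (X i) μ = P) :
    ∀ᵐ ω ∂μ, Tendsto (fun n : ℕ =>
        ⨆ h : H, |(1 / n : ℝ) * ∑ i ∈ Finset.range n, f (h : EuclideanSpace ℝ (Fin k)) (X i ω)
          - ∫ θ, f (h : EuclideanSpace ℝ (Fin k)) θ ∂P|)
      atTop (𝓝 0) :=
  stmt1_general Θ P H hH f hf_meas hf_cont hsup_int μ X hX_meas hX_indep hX_law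
end

section
/- Suppose that with probability 1 the function h ↦ S_1(h) is continuous on H, that sup_{h∈H} |S_1(h)| is measurable, and that E(sup_{h∈H} |S_1(h)|) < ∞. Then, almost surely, sup_{h∈H} | (∑_{r=1}^R S_r(h)) / (∑_{r=1}^R N_r) − E(S_1(h))/E(N_1) | → 0 as R → ∞. -/
/-!
A tour sum `S_r` that is continuous is an element of the separable Banach space `C(H, ℝ)`,
whose norm is the supremum over `H`. Etemadi's strong law in `C(H, ℝ)` for the `S_r` and in `ℝ`
for the `N_r` therefore gives the uniform convergence of the ratio. The one subtlety is
measurability: the continuous functions do not form a measurable set for the product σ-algebra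
on `H → ℝ`, so the passage to `C(H, ℝ)` goes through a measurable map that extends a function
from a countable dense set `T` whenever it is uniformly continuous on `T` (a countable condition)
and that is the identity on continuous functions.
-/

open MeasureTheory ProbabilityTheory Filter Topology Finset

theorem measurableSet_setOf_uniformContinuous {ι : Type*} [Countable ι] [PseudoMetricSpace ι] :
    MeasurableSet {f : ι → ℝ | UniformContinuous f} := by
  have hbasis := Metric.uniformity_basis_dist_inv_nat_succ (α := ι)
  simp only [hbasis.uniformContinuous_iff Metric.uniformity_basis_dist_inv_nat_succ,
    true_implies, true_and, Set.mem_ofPred_eq, Set.ofPred_forall, Set.ofPred_exists]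
  exact .iInter fun j => .iUnion fun i => .iInter fun x => .iInter fun y => .iInter fun _ =>
    measurableSet_lt (by fun_prop) measurable_const

theorem exists_continuousMap_eqOn_of_uniformContinuous_domRestrict {K : Type*} [UniformSpace K]
    {T : Set K} (hT : Dense T) {f : K → ℝ} (hf : UniformContinuous (T.domRestrict f)) :
    ∃ g : C(K, ℝ), Set.EqOn g f T := by
  have hT' : DenseRange ((↑) : T → K) := by rwa [DenseRange, Subtype.range_coe]
  have he : IsUniformInducing ((↑) : T → K) := isUniformEmbedding_subtype_val.isUniformInducing
  refine ⟨⟨_, (uniformContinuous_uniformly_extend he hT' hf).continuous⟩, fun x hx => ?_⟩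
  exact (he.isDenseInducing hT').extend_eq hf.continuous ⟨x, hx⟩

theorem ContinuousMap.measurable_of_measurable_apply_dense {α K : Type*} [MeasurableSpace α]
    [MetricSpace K] [CompactSpace K] [MeasurableSpace C(K, ℝ)] [BorelSpace C(K, ℝ)]
    {T : Set K} (hTc : T.Countable) (hT : Dense T) {u : α → C(K, ℝ)}
    (hu : ∀ x ∈ T, Measurable fun a => u a x) : Measurable u := by
  have : Countable T := hTc.to_subtype
  have hemb : MeasurableEmbedding fun (g : C(K, ℝ)) (x : T) => g x := by
    refine Continuous.measurableEmbedding (by fun_prop) fun g g' hgg' => ?_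
    refine ContinuousMap.coe_injective (Continuous.ext_on hT g.continuous g'.continuous ?_)
    exact fun x hx => congrFun hgg' ⟨x, hx⟩
  rw [← hemb.measurable_comp_iff]
  exact measurable_pi_iff.2 fun x => hu x x.2

theorem ContinuousMap.exists_measurable_eq_of_continuous {K : Type*} [MetricSpace K]
    [CompactSpace K] [MeasurableSpace C(K, ℝ)] [BorelSpace C(K, ℝ)] :
    ∃ Ψ : (K → ℝ) → C(K, ℝ), Measurable Ψ ∧ ∀ f, Continuous f → ⇑(Ψ f) = f := by
  classical
  obtain ⟨T, hTc, hT⟩ := TopologicalSpace.exists_countable_dense K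
  have : Countable T := hTc.to_subtype
  set U := {f : K → ℝ | UniformContinuous (T.domRestrict f)}
  have hU : MeasurableSet U :=
    Set.measurable_restrict (X := fun _ : K => ℝ) T
      (measurableSet_setOf_uniformContinuous (ι := T))
  let Ψ f := if hf : f ∈ U then
    (exists_continuousMap_eqOn_of_uniformContinuous_domRestrict hT hf).choose else 0
  have hΨT : ∀ f ∈ U, Set.EqOn (Ψ f) f T := fun f hf => by
    simpa [Ψ, dif_pos hf] using
      (exists_continuousMap_eqOn_of_uniformContinuous_domRestrict hT hf).choose_spec
  refine ⟨Ψ, ContinuousMap.measurable_of_measurable_apply_dense hTc hT fun x hx => ?_,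
    fun f hf => ?_⟩
  · have : (fun f => Ψ f x) = fun f => if f ∈ U then f x else 0 := by
      ext f
      split_ifs with hf
      · exact hΨT f hf hx
      · simp [Ψ, dif_neg hf]
    rw [this]
    exact Measurable.ite hU (measurable_pi_apply x) measurable_const
  · have hfU : f ∈ U :=
      (CompactSpace.uniformContinuous_of_continuous hf).comp uniformContinuous_subtype_val
    exact Continuous.ext_on hT (Ψ f).continuous hf (hΨT f hfU)

theorem tendsto_inv_sum_smul_sum {E : Type*} [NormedAddCommGroup E] [NormedSpace ℝ E]
    {Y : ℕ → E} {n : ℕ → ℝ} {m : E} {c : ℝ} (hc : c ≠ 0)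
    (hY : Tendsto (fun R : ℕ => (R : ℝ)⁻¹ • ∑ i ∈ range R, Y i) atTop (𝓝 m))
    (hn : Tendsto (fun R : ℕ => (∑ i ∈ range R, n i) / R) atTop (𝓝 c)) :
    Tendsto (fun R => (∑ i ∈ range R, n i)⁻¹ • ∑ i ∈ range R, Y i) atTop (𝓝 (c⁻¹ • m)) := by
  refine ((hn.inv₀ hc).smul hY).congr' ?_
  filter_upwards [eventually_ne_atTop 0] with R hR
  rw [smul_smul, inv_div]
  congr 1
  field_simp

theorem ae_tendsto_inv_sum_smul_sum {Ω α E : Type*} [MeasurableSpace Ω] {μ : Measure Ω}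
    [MeasurableSpace α] [NormedAddCommGroup E] [NormedSpace ℝ E] [CompleteSpace E]
    [MeasurableSpace E] [BorelSpace E]
    {X : ℕ → Ω → α} (hindep : iIndepFun X μ) (hident : ∀ r, IdentDistrib (X r) (X 0) μ μ)
    {φ : α → E} {ψ : α → ℝ} (hφ : Measurable φ) (hψ : Measurable ψ)
    (hφ_int : Integrable (φ ∘ X 0) μ) (hψ_int : Integrable (ψ ∘ X 0) μ)
    (hψ_ne : ∫ ω, ψ (X 0 ω) ∂μ ≠ 0) :
    ∀ᵐ ω ∂μ, Tendsto (fun R => (∑ r ∈ range R, ψ (X r ω))⁻¹ • ∑ r ∈ range R, φ (X r ω))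
      atTop (𝓝 ((∫ ω, ψ (X 0 ω) ∂μ)⁻¹ • ∫ ω, φ (X 0 ω) ∂μ)) := by
  have hφ_lln := strong_law_ae (fun r => φ ∘ X r) hφ_int
    (fun i j hij => (hindep.indepFun hij).comp hφ hφ) fun r => (hident r).comp hφ
  have hψ_lln := strong_law_ae_real (fun r => ψ ∘ X r) hψ_int
    (fun i j hij => (hindep.indepFun hij).comp hψ hψ) fun r => (hident r).comp hψ
  filter_upwards [hφ_lln, hψ_lln] with ω hφω hψω
  exact tendsto_inv_sum_smul_sum hψ_ne hφω hψω

theorem stmt3_general {k : ℕ} (H : Set (EuclideanSpace ℝ (Fin k))) (hH : IsCompact H)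
    {Ω : Type*} [MeasurableSpace Ω] (μ : Measure Ω) [IsProbabilityMeasure μ]
    (N : ℕ → Ω → ℕ) (S : ℕ → Ω → H → ℝ)
    (hN_pos : ∀ r ω, 1 ≤ N r ω)
    (hiid_indep : iIndepFun (fun r ω => (N r ω, S r ω)) μ)
    (hiid_ident : ∀ r, IdentDistrib (fun ω => (N r ω, S r ω)) (fun ω => (N 0 ω, S 0 ω)) μ μ)
    (hN_int : Integrable (fun ω => (N 0 ω : ℝ)) μ)
    (hS_cont : ∀ r, ∀ᵐ ω ∂μ, Continuous (S r ω))
    (hsup_int : ∀ r, Integrable (fun ω => ⨆ h : H, |S r ω h|) μ) :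
    ∀ᵐ ω ∂μ, Tendsto (fun R : ℕ =>
        ⨆ h : H, |(∑ r ∈ Finset.range R, S r ω h) / (∑ r ∈ Finset.range R, (N r ω : ℝ))
          - (∫ ω', S 0 ω' h ∂μ) / (∫ ω', (N 0 ω' : ℝ) ∂μ)|)
      atTop (𝓝 0) := by
  have : CompactSpace H := isCompact_iff_compactSpace.mp hH
  let : MeasurableSpace C(H, ℝ) := borel _
  have : BorelSpace C(H, ℝ) := ⟨rfl⟩
  obtain ⟨Ψ, hΨ, hΨ_eq⟩ := ContinuousMap.exists_measurable_eq_of_continuous (K := H)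
  have hY_int : Integrable (fun ω => Ψ (S 0 ω)) μ := by
    refine (hsup_int 0).mono' ((hΨ.comp measurable_snd).comp_aemeasurable
      (hiid_ident 0).aemeasurable_fst).aestronglyMeasurable ?_
    filter_upwards [hS_cont 0] with ω hω
    simp [ContinuousMap.norm_eq_iSup_norm, hΨ_eq _ hω]
  have hY_mean (h : H) : (∫ ω, Ψ (S 0 ω) ∂μ) h = ∫ ω, S 0 ω h ∂μ := by
    rw [ContinuousMap.integral_apply hY_int]
    refine integral_congr_ae ?_
    filter_upwards [hS_cont 0] with ω hω
    rw [hΨ_eq _ hω]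
  have hN_mean : (∫ ω, (N 0 ω : ℝ) ∂μ) ≠ 0 := by
    refine (zero_lt_one.trans_le ?_).ne'
    simpa using integral_mono (integrable_const 1) hN_int fun ω => Nat.one_le_cast.2 (hN_pos 0 ω)
  filter_upwards [ae_tendsto_inv_sum_smul_sum hiid_indep hiid_ident (hΨ.comp measurable_snd)
    (measurable_from_top.comp measurable_fst) hY_int hN_int hN_mean, ae_all_iff.2 hS_cont]
    with ω hω hcont
  refine (tendsto_iff_norm_sub_tendsto_zero.1 hω).congr fun R => ?_
  refine (ContinuousMap.norm_eq_iSup_norm _).trans (iSup_congr fun h => ?_)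
  simp [hY_mean, hΨ_eq _ (hcont _), div_eq_inv_mul]

/-- Glivenko–Cantelli, regenerative/Markov-chain case.  For iid tour pairs
`(N_r, S_r)` with `N_r ≥ 1`, `E N₁ < ∞`, `h ↦ S₁(h)` a.s. continuous on the compact set `H`,
and `sup_{h ∈ H} |S₁(h)|` measurable with finite expectation,
`sup_{h ∈ H} |∑_{r≤R} S_r(h) / ∑_{r≤R} N_r − E S₁(h) / E N₁| → 0` almost surely. -/
theorem stmt3 {k : ℕ} (H : Set (EuclideanSpace ℝ (Fin k))) (hH : IsCompact H)
    {Ω : Type*} [MeasurableSpace Ω] (μ : Measure Ω) [IsProbabilityMeasure μ]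
    (N : ℕ → Ω → ℕ) (S : ℕ → Ω → H → ℝ)
    (hN_pos : ∀ r ω, 1 ≤ N r ω)
    (hiid_indep : iIndepFun (fun r ω => (N r ω, S r ω)) μ)
    (hiid_ident : ∀ r, IdentDistrib (fun ω => (N r ω, S r ω)) (fun ω => (N 0 ω, S 0 ω)) μ μ)
    (hN_int : Integrable (fun ω => (N 0 ω : ℝ)) μ)
    (hS_cont : ∀ r, ∀ᵐ ω ∂μ, Continuous (S r ω))
    (hsup_meas : ∀ r, Measurable (fun ω => ⨆ h : H, |S r ω h|))
    (hsup_int : ∀ r, Integrable (fun ω => ⨆ h : H, |S r ω h|) μ) :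
    ∀ᵐ ω ∂μ, Tendsto (fun R : ℕ =>
        ⨆ h : H, |(∑ r ∈ Finset.range R, S r ω h) / (∑ r ∈ Finset.range R, (N r ω : ℝ))
          - (∫ ω', S 0 ω' h ∂μ) / (∫ ω', (N 0 ω' : ℝ) ∂μ)|)
      atTop (𝓝 0) :=
  stmt3_general H hH μ N S hN_pos hiid_indep hiid_ident hN_int hS_cont hsup_int
end

section
/- Fix hyperparameters h and h_1, assume ν_{h_1}(θ) > 0 for μ-almost all θ ∈ Θ, let g : Θ → ℝ be measurable with ∫ |g| ℓ ν_h dμ < ∞, and define the posterior expectation I_g(h) = ∫ g ν_{h,y} dμ. Then ∫ g (ν_h/ν_{h_1}) ν_{h_1,y} dμ = (m(h)/m(h_1)) · I_g(h), and consequently ( ∫ g (ν_h/ν_{h_1}) ν_{h_1,y} dμ ) / ( ∫ (ν_h/ν_{h_1}) ν_{h_1,y} dμ ) = I_g(h). -/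
open MeasureTheory

/-! Where `ν h₁ > 0`, the importance weight `ν h / ν h₁` cancels the prior inside `ν_{h₁,y}`,
so the reweighted posterior is `ℓ ν_h / m(h₁) = (m(h) / m(h₁)) ν_{h,y}` almost everywhere.
Integrating against `g`, and against `1` for the denominator, gives both identities. -/

lemma div_mul_mul_div_cancel_right {K : Type*} [Field K] {v w : K} (hw : w ≠ 0) (l c : K) :
    v / w * (l * w / c) = l * v / c := by
  field_simp

section

variable {Θ : Type*} [MeasurableSpace Θ] {μ : Measure Θ}

lemma reweighted_density_ae_eq {ℓ v w : Θ → ℝ} (hw : ∀ᵐ θ ∂μ, w θ ≠ 0) (c : ℝ) :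
    (fun θ => v θ / w θ * (ℓ θ * w θ / c)) =ᵐ[μ] fun θ => ℓ θ * v θ / c :=
  hw.mono fun θ hθ => div_mul_mul_div_cancel_right hθ (ℓ θ) c

lemma integral_mul_div_const (f p : Θ → ℝ) (c : ℝ) :
    ∫ θ, f θ * (p θ / c) ∂μ = (∫ θ, f θ * p θ ∂μ) / c := by
  simp_rw [← mul_div_assoc]
  exact integral_div c _

end

theorem stmt8_general {Θ 𝓗 : Type*} [MeasurableSpace Θ] (μ : Measure Θ)
    (ℓ : Θ → ℝ)
    (ν : 𝓗 → Θ → ℝ)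
    (h h₁ : 𝓗)
    (hm_pos : 0 < ∫ θ, ℓ θ * ν h θ ∂μ)
    (hm₁_pos : 0 < ∫ θ, ℓ θ * ν h₁ θ ∂μ)
    (hν₁_pos : ∀ᵐ θ ∂μ, 0 < ν h₁ θ)
    (g : Θ → ℝ) :
    (∫ θ, g θ * ((ν h θ / ν h₁ θ) * (ℓ θ * ν h₁ θ / (∫ θ', ℓ θ' * ν h₁ θ' ∂μ))) ∂μ
        = ((∫ θ, ℓ θ * ν h θ ∂μ) / (∫ θ, ℓ θ * ν h₁ θ ∂μ)) *
          ∫ θ, g θ * (ℓ θ * ν h θ / (∫ θ', ℓ θ' * ν h θ' ∂μ)) ∂μ) ∧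
    ((∫ θ, g θ * ((ν h θ / ν h₁ θ) * (ℓ θ * ν h₁ θ / (∫ θ', ℓ θ' * ν h₁ θ' ∂μ))) ∂μ) /
        (∫ θ, (ν h θ / ν h₁ θ) * (ℓ θ * ν h₁ θ / (∫ θ', ℓ θ' * ν h₁ θ' ∂μ)) ∂μ)
        = ∫ θ, g θ * (ℓ θ * ν h θ / (∫ θ', ℓ θ' * ν h θ' ∂μ)) ∂μ) := by
  set m := ∫ θ, ℓ θ * ν h θ ∂μ
  set m₁ := ∫ θ, ℓ θ * ν h₁ θ ∂μ
  have hreweight := reweighted_density_ae_eq (ℓ := ℓ) (v := ν h)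
    (hν₁_pos.mono fun _ hθ => hθ.ne') m₁
  have hnum : ∫ θ, g θ * ((ν h θ / ν h₁ θ) * (ℓ θ * ν h₁ θ / m₁)) ∂μ
      = (∫ θ, g θ * (ℓ θ * ν h θ) ∂μ) / m₁ := by
    rw [integral_congr_ae (hreweight.mono fun θ hθ => congrArg (g θ * ·) hθ),
      integral_mul_div_const]
  have hden : ∫ θ, (ν h θ / ν h₁ θ) * (ℓ θ * ν h₁ θ / m₁) ∂μ = m / m₁ := by
    rw [integral_congr_ae hreweight, integral_div]
  rw [hnum, hden, integral_mul_div_const]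
  constructor <;> field_simp

/-- In the Bayesian setting with priors `ν h`, likelihood `ℓ`, marginal
likelihood `m h = ∫ ℓ ν_h dμ ∈ (0, ∞)`, posterior `ν_{h,y} = ℓ ν_h / m h`, and posterior
expectation `I_g(h) = ∫ g ν_{h,y} dμ`:
`∫ g (ν_h/ν_{h₁}) ν_{h₁,y} dμ = (m h / m h₁) · I_g(h)`, and consequently the ratio
`(∫ g (ν_h/ν_{h₁}) ν_{h₁,y} dμ) / (∫ (ν_h/ν_{h₁}) ν_{h₁,y} dμ)` equals `I_g(h)`. -/
theorem stmt8 {Θ 𝓗 : Type*} [MeasurableSpace Θ] (μ : Measure Θ)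
    (ℓ : Θ → ℝ) (hℓ_meas : Measurable ℓ) (hℓ_nonneg : ∀ θ, 0 ≤ ℓ θ)
    (ν : 𝓗 → Θ → ℝ) (hν_meas : ∀ h, Measurable (ν h)) (hν_nonneg : ∀ h θ, 0 ≤ ν h θ)
    (h h₁ : 𝓗)
    (hint : Integrable (fun θ => ℓ θ * ν h θ) μ)
    (hint₁ : Integrable (fun θ => ℓ θ * ν h₁ θ) μ)
    (hm_pos : 0 < ∫ θ, ℓ θ * ν h θ ∂μ)
    (hm₁_pos : 0 < ∫ θ, ℓ θ * ν h₁ θ ∂μ)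
    (hν₁_pos : ∀ᵐ θ ∂μ, 0 < ν h₁ θ)
    (g : Θ → ℝ) (hg_meas : Measurable g)
    (hg_int : Integrable (fun θ => g θ * (ℓ θ * ν h θ)) μ) :
    (∫ θ, g θ * ((ν h θ / ν h₁ θ) * (ℓ θ * ν h₁ θ / (∫ θ', ℓ θ' * ν h₁ θ' ∂μ))) ∂μ
        = ((∫ θ, ℓ θ * ν h θ ∂μ) / (∫ θ, ℓ θ * ν h₁ θ ∂μ)) *
          ∫ θ, g θ * (ℓ θ * ν h θ / (∫ θ', ℓ θ' * ν h θ' ∂μ)) ∂μ) ∧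
    ((∫ θ, g θ * ((ν h θ / ν h₁ θ) * (ℓ θ * ν h₁ θ / (∫ θ', ℓ θ' * ν h₁ θ' ∂μ))) ∂μ) /
        (∫ θ, (ν h θ / ν h₁ θ) * (ℓ θ * ν h₁ θ / (∫ θ', ℓ θ' * ν h₁ θ' ∂μ)) ∂μ)
        = ∫ θ, g θ * (ℓ θ * ν h θ / (∫ θ', ℓ θ' * ν h θ' ∂μ)) ∂μ) :=
  stmt8_general μ ℓ ν h h₁ hm_pos hm₁_pos hν₁_pos g
end

section
/- Assume the log-partition function A is continuous on Ω = [a, b] × [c, d]. Then there exist positive constants c_1, c_2, c_3, c_4 such that for all θ ∈ Θ, sup_{ω∈Ω} ν_ω(θ) ≤ c_1 ν_{(b,d)}(θ) + c_2 ν_{(b,c)}(θ) + c_3 ν_{(a,d)}(θ) + c_4 ν_{(a,c)}(θ). -/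
open MeasureTheory

/-- For a two-parameter exponential family
`ν ω θ = exp(ω₁ T₁ θ + ω₂ T₂ θ − A ω)` on `Ω = [a,b] × [c,d]`, with continuous log-partition
function `A`, there are positive constants `c₁, …, c₄` such that for all `θ`,
`sup_{ω ∈ Ω} ν ω θ ≤ c₁ ν_{(b,d)} θ + c₂ ν_{(b,c)} θ + c₃ ν_{(a,d)} θ + c₄ ν_{(a,c)} θ`. -/
theorem stmt12 {Θ : Type*} [MeasurableSpace Θ] (μ : Measure Θ) [SigmaFinite μ]
    (T₁ T₂ : Θ → ℝ) (hT₁ : Measurable T₁) (hT₂ : Measurable T₂)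
    (a b c d : ℝ) (hab : a ≤ b) (hcd : c ≤ d)
    (A : ℝ × ℝ → ℝ)
    (hA : ∀ ω ∈ Set.Icc a b ×ˢ Set.Icc c d,
      ENNReal.ofReal (Real.exp (A ω))
        = ∫⁻ θ, ENNReal.ofReal (Real.exp (ω.1 * T₁ θ + ω.2 * T₂ θ)) ∂μ)
    (hA_cont : ContinuousOn A (Set.Icc a b ×ˢ Set.Icc c d)) :
    ∃ c₁ c₂ c₃ c₄ : ℝ, 0 < c₁ ∧ 0 < c₂ ∧ 0 < c₃ ∧ 0 < c₄ ∧
      ∀ θ : Θ, ∀ ω ∈ Set.Icc a b ×ˢ Set.Icc c d,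
        Real.exp (ω.1 * T₁ θ + ω.2 * T₂ θ - A ω) ≤
          c₁ * Real.exp (b * T₁ θ + d * T₂ θ - A (b, d)) +
          c₂ * Real.exp (b * T₁ θ + c * T₂ θ - A (b, c)) +
          c₃ * Real.exp (a * T₁ θ + d * T₂ θ - A (a, d)) +
          c₄ * Real.exp (a * T₁ θ + c * T₂ θ - A (a, c)) := by
  set Ω : Set (ℝ × ℝ) := Set.Icc a b ×ˢ Set.Icc c d with hΩ
  have hcomp : IsCompact Ω := (isCompact_Icc).prod isCompact_Icc
  have hne : Ω.Nonempty := ⟨(a, c), ⟨le_refl a, hab⟩, ⟨le_refl c, hcd⟩⟩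
  obtain ⟨ω₀, hω₀, hmin⟩ := hcomp.exists_isMinOn hne hA_cont
  set m := A ω₀ with hm
  have hbd : (b, d) ∈ Ω := ⟨⟨hab, le_refl b⟩, ⟨hcd, le_refl d⟩⟩
  have hbc : (b, c) ∈ Ω := ⟨⟨hab, le_refl b⟩, ⟨le_refl c, hcd⟩⟩
  have had : (a, d) ∈ Ω := ⟨⟨le_refl a, hab⟩, ⟨hcd, le_refl d⟩⟩
  have hac : (a, c) ∈ Ω := ⟨⟨le_refl a, hab⟩, ⟨le_refl c, hcd⟩⟩
  refine ⟨Real.exp (A (b, d) - m), Real.exp (A (b, c) - m),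
    Real.exp (A (a, d) - m), Real.exp (A (a, c) - m),
    Real.exp_pos _, Real.exp_pos _, Real.exp_pos _, Real.exp_pos _, ?_⟩
  intro θ ω hω
  have hAω : m ≤ A ω := hmin hω
  obtain ⟨⟨h1a, h1b⟩, ⟨h2c, h2d⟩⟩ := hω
  rw [← Real.exp_add, ← Real.exp_add, ← Real.exp_add, ← Real.exp_add]
  have e1 : A (b, d) - m + (b * T₁ θ + d * T₂ θ - A (b, d)) = b * T₁ θ + d * T₂ θ - m := by ring
  have e2 : A (b, c) - m + (b * T₁ θ + c * T₂ θ - A (b, c)) = b * T₁ θ + c * T₂ θ - m := by ring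
  have e3 : A (a, d) - m + (a * T₁ θ + d * T₂ θ - A (a, d)) = a * T₁ θ + d * T₂ θ - m := by ring
  have e4 : A (a, c) - m + (a * T₁ θ + c * T₂ θ - A (a, c)) = a * T₁ θ + c * T₂ θ - m := by ring
  rw [e1, e2, e3, e4]
  -- ω·T ≤ some corner
  have h1 : ω.1 * T₁ θ ≤ a * T₁ θ ∨ ω.1 * T₁ θ ≤ b * T₁ θ := by
    rcases le_or_gt 0 (T₁ θ) with h | h
    · exact Or.inr (mul_le_mul_of_nonneg_right h1b h)
    · exact Or.inl (mul_le_mul_of_nonpos_right h1a h.le)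
  have h2 : ω.2 * T₂ θ ≤ c * T₂ θ ∨ ω.2 * T₂ θ ≤ d * T₂ θ := by
    rcases le_or_gt 0 (T₂ θ) with h | h
    · exact Or.inr (mul_le_mul_of_nonneg_right h2d h)
    · exact Or.inl (mul_le_mul_of_nonpos_right h2c h.le)
  have hle : ∀ x : ℝ, ω.1 * T₁ θ + ω.2 * T₂ θ - A ω ≤ x - m →
      Real.exp (ω.1 * T₁ θ + ω.2 * T₂ θ - A ω) ≤ Real.exp (x - m) :=
    fun x hx => Real.exp_le_exp.mpr hx
  have pos : ∀ x : ℝ, (0:ℝ) < Real.exp x := Real.exp_pos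
  rcases h1 with h1 | h1 <;> rcases h2 with h2 | h2
  · -- (a, c)
    have := hle (a * T₁ θ + c * T₂ θ) (by linarith)
    nlinarith [pos (b * T₁ θ + d * T₂ θ - m), pos (b * T₁ θ + c * T₂ θ - m),
      pos (a * T₁ θ + d * T₂ θ - m)]
  · -- (a, d)
    have := hle (a * T₁ θ + d * T₂ θ) (by linarith)
    nlinarith [pos (b * T₁ θ + d * T₂ θ - m), pos (b * T₁ θ + c * T₂ θ - m),
      pos (a * T₁ θ + c * T₂ θ - m)]
  · -- (b, c)
    have := hle (b * T₁ θ + c * T₂ θ) (by linarith)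
    nlinarith [pos (b * T₁ θ + d * T₂ θ - m), pos (a * T₁ θ + d * T₂ θ - m),
      pos (a * T₁ θ + c * T₂ θ - m)]
  · -- (b, d)
    have := hle (b * T₁ θ + d * T₂ θ) (by linarith)
    nlinarith [pos (b * T₁ θ + c * T₂ θ - m), pos (a * T₁ θ + d * T₂ θ - m),
      pos (a * T₁ θ + c * T₂ θ - m)]
end

section
/- Assume: with probability 1, the functions h ↦ S_1(h) and h ↦ T_1(h) are continuous on H and S_1(h) ≥ 0 for all h; sup_{h∈H} |S_1(h)| and sup_{h∈H} |T_1(h)| are measurable with finite expectation; and E(S_1(h)) > 0 for every h ∈ H. Then, almost surely, sup_{h∈H} | (∑_{r=1}^R T_r(h)) / (∑_{r=1}^R S_r(h)) − E(T_1(h))/E(S_1(h)) | → 0 as R → ∞. -/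
/-!
Transport everything to the separable Banach space `C(H, ℝ)`. A measurable map
`ψ : (H → ℝ) → C(H, ℝ)` that is the identity on continuous functions turns the almost surely
continuous tours `S r`, `T r` into i.i.d. integrable `C(H, ℝ)`-valued random variables, so
Etemadi's strong law of large numbers in Banach spaces makes the tour averages converge
uniformly on `H` to `h ↦ E S₁(h)` and `h ↦ E T₁(h)`. The limit of the averages of `S` has no
zero, hence is a unit of the Banach algebra `C(H, ℝ)`; continuity of inversion at units then
gives uniform convergence of the quotients.
-/

open MeasureTheory ProbabilityTheory Filter Topology Function

theorem measurable_of_measurable_dist {α β : Type*} [MeasurableSpace α] [PseudoMetricSpace β]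
    [SecondCountableTopology β] [MeasurableSpace β] [BorelSpace β] {f : α → β}
    (hf : ∀ c, Measurable fun a => dist (f a) c) : Measurable f := by
  refine measurable_of_isOpen fun U hU => ?_
  let balls : Set (Set β) := {B | ∃ c r, B = Metric.ball c r ∧ B ⊆ U}
  obtain ⟨T, hTc, hTballs, hTU⟩ := TopologicalSpace.isOpen_sUnion_countable balls
    (by rintro _ ⟨c, r, rfl, -⟩; exact Metric.isOpen_ball)
  have hballs : ⋃₀ balls = U := by
    refine Set.Subset.antisymm (Set.sUnion_subset fun B hB => ?_) fun x hx => ?_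
    · obtain ⟨c, r, -, hBU⟩ := hB
      exact hBU
    · obtain ⟨ε, hε, hεU⟩ := Metric.isOpen_iff.1 hU x hx
      exact ⟨_, ⟨x, ε, rfl, hεU⟩, Metric.mem_ball_self hε⟩
  rw [← hballs, ← hTU, Set.preimage_sUnion]
  refine MeasurableSet.biUnion hTc fun B hB => ?_
  obtain ⟨c, r, rfl, -⟩ := hTballs hB
  exact measurableSet_lt (hf c) measurable_const

theorem measurableSet_setOf_uniformContinuousOn {K E : Type*} [PseudoMetricSpace K]
    [PseudoMetricSpace E] [SecondCountableTopology E] [MeasurableSpace E] [BorelSpace E]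
    {D : Set K} (hD : D.Countable) : MeasurableSet {f : K → E | UniformContinuousOn f D} := by
  have : Countable D := hD.to_subtype
  simp_rw [uniformContinuousOn_iff_restrict,
    Metric.uniformity_basis_dist_inv_nat_succ.uniformContinuous_iff
      Metric.uniformity_basis_dist_inv_nat_succ]
  simp only [true_implies, true_and]
  refine measurableSet_setOfPred.2 ?_
  refine Measurable.forall fun i => Measurable.exists fun j => Measurable.forall fun x =>
    Measurable.forall fun y => Measurable.imp measurable_const ?_
  exact measurableSet_setOfPred.1 (measurableSet_lt
    ((measurable_pi_apply (x : K)).dist (measurable_pi_apply (y : K))) measurable_const)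

theorem UniformContinuousOn.exists_continuousMap_eqOn {K E : Type*} [UniformSpace K]
    [UniformSpace E] [CompleteSpace E] [T0Space E] {D : Set K} (hD : Dense D) {f : K → E}
    (hf : UniformContinuousOn f D) : ∃ g : C(K, E), Set.EqOn g f D := by
  have hf' : UniformContinuous (D.domRestrict f) := uniformContinuousOn_iff_restrict.1 hf
  have hi : IsUniformInducing ((↑) : D → K) := isUniformEmbedding_subtype_val.isUniformInducing
  have hd : DenseRange ((↑) : D → K) := hD.denseRange_val
  exact ⟨⟨_, (uniformContinuous_uniformly_extend hi hd hf').continuous⟩,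
    fun x hx => uniformly_extend_of_ind hi hd hf' ⟨x, hx⟩⟩

namespace ContinuousMap

theorem measurable_of_measurable_eval {K E α : Type*} [TopologicalSpace K] [CompactSpace K]
    [PseudoMetricSpace E] [SecondCountableTopology E] [MeasurableSpace E] [BorelSpace E]
    [MeasurableSpace α] [SecondCountableTopology C(K, E)] [MeasurableSpace C(K, E)]
    [BorelSpace C(K, E)]
    {D : Set K} (hD : Dense D) (hDc : D.Countable) {u : α → C(K, E)}
    (hu : ∀ x ∈ D, Measurable fun a => u a x) : Measurable u := by
  refine measurable_of_measurable_dist fun c => ?_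
  have : Countable D := hDc.to_subtype
  have hsup : (fun a => dist (u a) c) = fun a => ⨆ x : D, dist (u a x) (c x) := by
    ext a
    rw [dist_eq_iSup]
    exact (hD.ciSup' (f := fun x => dist (u a x) (c x)) (by fun_prop)).symm
  rw [hsup]
  exact Measurable.iSup fun x => (hu x x.2).dist measurable_const

/-- The set of continuous functions is not measurable for the product σ-algebra on `K → E`, so
`ContinuousMap.mkD` is of no use here; instead `ψ` extends the restriction of `f` to a countable
dense set whenever that restriction is uniformly continuous. -/
theorem exists_measurable_leftInverse_coeFn {K : Type*} [MetricSpace K] [CompactSpace K]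
    {E : Type*} [MetricSpace E] [CompleteSpace E] [SecondCountableTopology E] [Nonempty E]
    [MeasurableSpace E] [BorelSpace E] [MeasurableSpace C(K, E)] [BorelSpace C(K, E)] :
    ∃ ψ : (K → E) → C(K, E), Measurable ψ ∧ LeftInverse ψ (⇑) := by
  classical
  obtain ⟨D, hDc, hD⟩ := TopologicalSpace.exists_countable_dense K
  let e : E := Classical.arbitrary E
  let ψ : (K → E) → C(K, E) := fun f =>
    if hf : UniformContinuousOn f D then (hf.exists_continuousMap_eqOn hD).choose else const K e
  have hψ_eqOn : ∀ f, UniformContinuousOn f D → Set.EqOn (ψ f) f D := fun f hf => by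
    simpa only [ψ, dif_pos hf] using (hf.exists_continuousMap_eqOn hD).choose_spec
  refine ⟨ψ, measurable_of_measurable_eval hD hDc fun x hx => ?_, fun g => ?_⟩
  · have hψx : (fun f => ψ f x) = fun f => if UniformContinuousOn f D then f x else e := by
      ext f
      split_ifs with hf
      · exact hψ_eqOn f hf hx
      · simp only [ψ, dif_neg hf, const_apply]
    rw [hψx]
    exact Measurable.ite (measurableSet_setOf_uniformContinuousOn hDc) (measurable_pi_apply x)
      measurable_const
  · have hg : UniformContinuousOn g D :=
      (CompactSpace.uniformContinuous_of_continuous g.continuous).uniformContinuousOn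
    exact coe_injective (Continuous.ext_on hD (ψ g).continuous g.continuous (hψ_eqOn g hg))

theorem coe_eq_of_leftInverse_coeFn {K E : Type*} [TopologicalSpace K]
    [TopologicalSpace E] {ψ : (K → E) → C(K, E)} (hψ : LeftInverse ψ (⇑)) {f : K → E}
    (hf : Continuous f) : ⇑(ψ f) = f :=
  congrArg _ (hψ ⟨f, hf⟩)

theorem inverse_apply {K R : Type*} [TopologicalSpace K] [Ring R] [TopologicalSpace R]
    [IsTopologicalRing R] {f : C(K, R)} (hf : IsUnit f) (x : K) :
    Ring.inverse f x = Ring.inverse (f x) := by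
  obtain ⟨u, rfl⟩ := hf
  let v : Rˣ := ⟨(u : C(K, R)) x, (↑u⁻¹ : C(K, R)) x, by rw [← mul_apply, u.mul_inv, one_apply],
    by rw [← mul_apply, u.inv_mul, one_apply]⟩
  rw [Ring.inverse_unit u, show (u : C(K, R)) x = v from rfl, Ring.inverse_unit v]
  rfl

theorem tendsto_iSup_norm_div_sub_div {K ι 𝕜 : Type*} [TopologicalSpace K] [CompactSpace K]
    [NormedField 𝕜] [CompleteSpace 𝕜] {l : Filter ι} {A B : ι → C(K, 𝕜)} {a b : C(K, 𝕜)}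
    (hA : Tendsto A l (𝓝 a)) (hB : Tendsto B l (𝓝 b)) (ha : ∀ x, a x ≠ 0) :
    Tendsto (fun i => ⨆ x, ‖B i x / A i x - b x / a x‖) l (𝓝 0) := by
  have ha_unit : IsUnit a := (isUnit_iff_forall_ne_zero a).2 ha
  have hlim : Tendsto (fun i => B i * Ring.inverse (A i)) l (𝓝 (b * Ring.inverse a)) :=
    hB.mul ((NormedRing.inverse_continuousAt ha_unit.unit).tendsto.comp hA)
  refine (tendsto_iff_norm_sub_tendsto_zero.1 hlim).congr' ?_
  filter_upwards [hA.eventually (Units.isOpen.mem_nhds ha_unit)] with i hi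
  simp [norm_eq_iSup_norm, inverse_apply hi, inverse_apply ha_unit, div_eq_mul_inv]

end ContinuousMap

section StrongLaw

variable {Ω : Type*} [MeasurableSpace Ω] {μ : Measure Ω}
  {K : Type*} [TopologicalSpace K] [CompactSpace K]
  {E : Type*} [NormedAddCommGroup E] [MeasurableSpace E]
  [MeasurableSpace C(K, E)] [BorelSpace C(K, E)] [SecondCountableTopology C(K, E)]
  {ψ : (K → E) → C(K, E)}

theorem integrable_comp_of_leftInverse_coeFn (hψm : Measurable ψ) (hψ : LeftInverse ψ (⇑))
    {F : Ω → K → E} (hF : AEMeasurable F μ) (hcont : ∀ᵐ ω ∂μ, Continuous (F ω))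
    (hint : Integrable (fun ω => ⨆ x, ‖F ω x‖) μ) : Integrable (fun ω => ψ (F ω)) μ := by
  refine hint.mono' (hψm.comp_aemeasurable hF).aestronglyMeasurable ?_
  filter_upwards [hcont] with ω hω
  rw [ContinuousMap.norm_eq_iSup_norm, ContinuousMap.coe_eq_of_leftInverse_coeFn hψ hω]

variable [NormedSpace ℝ E] [CompleteSpace E]

theorem integral_comp_leftInverse_coeFn_apply (hψm : Measurable ψ) (hψ : LeftInverse ψ (⇑))
    {F : Ω → K → E} (hF : AEMeasurable F μ) (hcont : ∀ᵐ ω ∂μ, Continuous (F ω))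
    (hint : Integrable (fun ω => ⨆ x, ‖F ω x‖) μ) (x : K) :
    (∫ ω, ψ (F ω) ∂μ) x = ∫ ω, F ω x ∂μ := by
  rw [← ContinuousMap.evalCLM_apply ℝ x,
    ← (ContinuousMap.evalCLM ℝ x).integral_comp_comm
      (integrable_comp_of_leftInverse_coeFn hψm hψ hF hcont hint)]
  refine integral_congr_ae ?_
  filter_upwards [hcont] with ω hω
  simp [ContinuousMap.coe_eq_of_leftInverse_coeFn hψ hω]

theorem strong_law_ae_continuousMap (hψm : Measurable ψ) (hψ : LeftInverse ψ (⇑))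
    (F : ℕ → Ω → K → E) (hindep : Pairwise ((IndepFun · · μ) on F))
    (hident : ∀ i, IdentDistrib (F i) (F 0) μ μ) (hcont : ∀ᵐ ω ∂μ, Continuous (F 0 ω))
    (hint : Integrable (fun ω => ⨆ x, ‖F 0 ω x‖) μ) :
    ∃ m : C(K, E), (∀ x, m x = ∫ ω, F 0 ω x ∂μ) ∧ ∀ᵐ ω ∂μ,
      Tendsto (fun n : ℕ => (n : ℝ)⁻¹ • ∑ i ∈ Finset.range n, ψ (F i ω)) atTop (𝓝 m) :=
  ⟨_, integral_comp_leftInverse_coeFn_apply hψm hψ (hident 0).aemeasurable_fst hcont hint,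
    strong_law_ae (fun i ω => ψ (F i ω))
      (integrable_comp_of_leftInverse_coeFn hψm hψ (hident 0).aemeasurable_fst hcont hint)
      (fun _ _ hij => (hindep hij).comp hψm hψm) fun i => (hident i).comp hψm⟩

end StrongLaw

theorem stmt16_general {k : ℕ} (H : Set (EuclideanSpace ℝ (Fin k))) (hH : IsCompact H)
    {Ω : Type*} [MeasurableSpace Ω] (μ : Measure Ω) [IsProbabilityMeasure μ]
    (N : ℕ → Ω → ℕ) (S T : ℕ → Ω → H → ℝ)
    (hiid_indep : iIndepFun (fun r ω => (N r ω, S r ω, T r ω)) μ)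
    (hiid_ident : ∀ r, IdentDistrib (fun ω => (N r ω, S r ω, T r ω))
      (fun ω => (N 0 ω, S 0 ω, T 0 ω)) μ μ)
    (hST_cont : ∀ r, ∀ᵐ ω ∂μ, Continuous (S r ω) ∧ Continuous (T r ω) ∧ ∀ h, 0 ≤ S r ω h)
    (hsupS_int : ∀ r, Integrable (fun ω => ⨆ h : H, |S r ω h|) μ)
    (hsupT_int : ∀ r, Integrable (fun ω => ⨆ h : H, |T r ω h|) μ)
    (hS_pos : ∀ h : H, 0 < ∫ ω, S 0 ω h ∂μ) :
    ∀ᵐ ω ∂μ, Tendsto (fun R : ℕ =>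
        ⨆ h : H, |(∑ r ∈ Finset.range R, T r ω h) / (∑ r ∈ Finset.range R, S r ω h)
          - (∫ ω', T 0 ω' h ∂μ) / (∫ ω', S 0 ω' h ∂μ)|)
      atTop (𝓝 0) := by
  have : CompactSpace H := isCompact_iff_compactSpace.mp hH
  borelize C(H, ℝ)
  obtain ⟨ψ, hψm, hψ⟩ := ContinuousMap.exists_measurable_leftInverse_coeFn (K := H) (E := ℝ)
  have hS_meas : Measurable fun p : ℕ × (H → ℝ) × (H → ℝ) => p.2.1 := by fun_prop
  have hT_meas : Measurable fun p : ℕ × (H → ℝ) × (H → ℝ) => p.2.2 := by fun_prop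
  have hS_cont : ∀ r, ∀ᵐ ω ∂μ, Continuous (S r ω) := fun r => (hST_cont r).mono fun _ h => h.1
  have hT_cont : ∀ r, ∀ᵐ ω ∂μ, Continuous (T r ω) := fun r => (hST_cont r).mono fun _ h => h.2.1
  obtain ⟨a, ha, hS_lim⟩ := strong_law_ae_continuousMap hψm hψ S
    (fun _ _ hij => (hiid_indep.indepFun hij).comp hS_meas hS_meas)
    (fun r => (hiid_ident r).comp hS_meas) (hS_cont 0) (by simpa using hsupS_int 0)
  obtain ⟨b, hb, hT_lim⟩ := strong_law_ae_continuousMap hψm hψ T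
    (fun _ _ hij => (hiid_indep.indepFun hij).comp hT_meas hT_meas)
    (fun r => (hiid_ident r).comp hT_meas) (hT_cont 0) (by simpa using hsupT_int 0)
  filter_upwards [hS_lim, hT_lim, ae_all_iff.2 hS_cont, ae_all_iff.2 hT_cont]
    with ω hSω hTω hSω_cont hTω_cont
  refine (ContinuousMap.tendsto_iSup_norm_div_sub_div hSω hTω fun h => ?_).congr' ?_
  · exact ha h ▸ (hS_pos h).ne'
  filter_upwards [eventually_ne_atTop 0] with R hR
  congr 1
  ext h
  simp [ha, hb, ContinuousMap.coe_eq_of_leftInverse_coeFn hψ (hSω_cont _),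
    ContinuousMap.coe_eq_of_leftInverse_coeFn hψ (hTω_cont _), Real.norm_eq_abs,
    mul_div_mul_left, hR]

/-- uniform consistency of the regenerative ratio estimator.  For iid tour
triples `(N_r, S_r, T_r)` with `S₁, T₁` a.s. continuous on the compact set `H`, `S₁ ≥ 0`,
`sup_h |S₁(h)|` and `sup_h |T₁(h)|` integrable, and `E S₁(h) > 0` for all `h`:  almost surely
`sup_{h ∈ H} |∑_{r≤R} T_r(h) / ∑_{r≤R} S_r(h) − E T₁(h) / E S₁(h)| → 0`. -/
theorem stmt16 {k : ℕ} (H : Set (EuclideanSpace ℝ (Fin k))) (hH : IsCompact H)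
    {Ω : Type*} [MeasurableSpace Ω] (μ : Measure Ω) [IsProbabilityMeasure μ]
    (N : ℕ → Ω → ℕ) (S T : ℕ → Ω → H → ℝ)
    (hN_pos : ∀ r ω, 1 ≤ N r ω)
    (hiid_indep : iIndepFun (fun r ω => (N r ω, S r ω, T r ω)) μ)
    (hiid_ident : ∀ r, IdentDistrib (fun ω => (N r ω, S r ω, T r ω))
      (fun ω => (N 0 ω, S 0 ω, T 0 ω)) μ μ)
    (hN_int : Integrable (fun ω => (N 0 ω : ℝ)) μ)
    (hST_cont : ∀ r, ∀ᵐ ω ∂μ, Continuous (S r ω) ∧ Continuous (T r ω) ∧ ∀ h, 0 ≤ S r ω h)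
    (hsupS_meas : ∀ r, Measurable (fun ω => ⨆ h : H, |S r ω h|))
    (hsupS_int : ∀ r, Integrable (fun ω => ⨆ h : H, |S r ω h|) μ)
    (hsupT_meas : ∀ r, Measurable (fun ω => ⨆ h : H, |T r ω h|))
    (hsupT_int : ∀ r, Integrable (fun ω => ⨆ h : H, |T r ω h|) μ)
    (hS_pos : ∀ h : H, 0 < ∫ ω, S 0 ω h ∂μ) :
    ∀ᵐ ω ∂μ, Tendsto (fun R : ℕ =>
        ⨆ h : H, |(∑ r ∈ Finset.range R, T r ω h) / (∑ r ∈ Finset.range R, S r ω h)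
          - (∫ ω', T 0 ω' h ∂μ) / (∫ ω', S 0 ω' h ∂μ)|)
      atTop (𝓝 0) :=
  stmt16_general H hH μ N S T hiid_indep hiid_ident hST_cont hsupS_int hsupT_int hS_pos
end

section
/- Assume: with probability 1, the function h ↦ S_1(h) is twice continuously differentiable on H; sup_{h∈H} ‖∇²_h S_1(h)‖ is measurable with E(sup_{h∈H} ‖∇²_h S_1(h)‖) < ∞; and the interchange ∇²_h E(S_1(h)) = E(∇²_h S_1(h)) holds for all h ∈ H. Define B_R(h) = (∑_{r=1}^R S_r(h)) / (∑_{r=1}^R N_r) and B(h) = E(S_1(h))/E(N_1). Then, almost surely, sup_{h∈H} ‖∇²_h B_R(h) − ∇²_h B(h)‖ → 0 as R → ∞. -/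
open MeasureTheory ProbabilityTheory Filter Topology

/-- The Hessian of `f : ℝ^k → ℝ` at a point, as a continuous linear map, i.e. the derivative of
the gradient. -/
noncomputable def hess {k : ℕ} (f : EuclideanSpace ℝ (Fin k) → ℝ)
    (h : EuclideanSpace ℝ (Fin k)) :
    EuclideanSpace ℝ (Fin k) →L[ℝ] EuclideanSpace ℝ (Fin k) :=
  fderiv ℝ (fun x => gradient f x) h

/-!
Transport the Hessians into the Banach space `C(H, ℝᵏ →L ℝᵏ)` with the sup norm: there
`sup_{h ∈ H} ‖∇² B_R(h) - ∇² B(h)‖` is the distance between `(∑ N_r)⁻¹ • ∑ ∇² S_r` and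
`(E N₁)⁻¹ • E ∇² S₁` (the interchange hypothesis identifies the mean), so the claim is the
Banach-space strong law of large numbers for `∇² S_r` combined with the real one for `N_r`.

The technical point is that `S ↦ ∇² S|_H` must be measurable for the product σ-algebra on
functions, so that it preserves independence. On `C²` functions it agrees with iterated limits of
difference quotients evaluated on a countable dense subset of `H`, and restriction to that subset
is a measurable embedding of the Polish space `C(H, ℝᵏ →L ℝᵏ)`.
-/

noncomputable section

section DifferenceQuotients

variable {F G : Type*} [NormedAddCommGroup F] [NormedSpace ℝ F]
  [NormedAddCommGroup G] [NormedSpace ℝ G]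

-- Unlike `fderiv`, a limit of evaluations of `g`, hence measurable in `g`.
def dirDerivLim (g : F → G) (v x : F) : G :=
  limUnder atTop fun t : ℕ => (t : ℝ) • (g (x + (t : ℝ)⁻¹ • v) - g x)

theorem DifferentiableAt.dirDerivLim_eq {g : F → G} {x : F} (hg : DifferentiableAt ℝ g x)
    (v : F) : dirDerivLim g v x = fderiv ℝ g x v := by
  refine Tendsto.limUnder_eq ?_
  simpa using hg.hasFDerivAt.lim v (by simpa using tendsto_natCast_atTop_atTop)

theorem measurable_dirDerivLim {α : Type*} [MeasurableSpace α] [CompleteSpace G]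
    [MeasurableSpace G] [BorelSpace G] [SecondCountableTopology G]
    {g : α → F → G} (hg : ∀ x, Measurable fun a => g a x) (v x : F) :
    Measurable fun a => dirDerivLim (g a) v x :=
  (StronglyMeasurable.limUnder fun _ =>
    (((hg _).sub (hg x)).const_smul _).stronglyMeasurable).measurable

end DifferenceQuotients

section OrthonormalBasis

variable {F G : Type*} [NormedAddCommGroup F] [InnerProductSpace ℝ F]
  [NormedAddCommGroup G] [NormedSpace ℝ G] {ι : Type*} [Fintype ι] (b : OrthonormalBasis ι ℝ F)

def gradientLim (f : F → ℝ) (x : F) : F :=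
  ∑ i, dirDerivLim f (b i) x • b i

def fderivLim (g : F → G) (x : F) : F →L[ℝ] G :=
  ∑ i, (innerSL ℝ (b i)).smulRight (dirDerivLim g (b i) x)

theorem OrthonormalBasis.sum_smul_fderiv_eq_gradient [CompleteSpace F] (f : F → ℝ) (x : F) :
    ∑ i, fderiv ℝ f x (b i) • b i = gradient f x := by
  conv_rhs => rw [← b.sum_repr' (gradient f x)]
  refine Finset.sum_congr rfl fun i _ => ?_
  rw [real_inner_comm, gradient, InnerProductSpace.toDual_symm_apply]

theorem OrthonormalBasis.sum_smulRight_eq (L : F →L[ℝ] G) :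
    ∑ i, (innerSL ℝ (b i)).smulRight (L (b i)) = L := by
  ext x
  conv_rhs => rw [← b.sum_repr' x]
  simp [map_sum, map_smul]

theorem gradientLim_eq [CompleteSpace F] {f : F → ℝ} (hf : Differentiable ℝ f) :
    gradientLim b f = gradient f := by
  funext x
  simp only [gradientLim, (hf x).dirDerivLim_eq, b.sum_smul_fderiv_eq_gradient]

theorem fderivLim_eq {g : F → G} {x : F} (hg : DifferentiableAt ℝ g x) :
    fderivLim b g x = fderiv ℝ g x := by
  simp only [fderivLim, hg.dirDerivLim_eq, b.sum_smulRight_eq]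

variable {α : Type*} [MeasurableSpace α]

theorem measurable_gradientLim [MeasurableSpace F] [BorelSpace F] [SecondCountableTopology F]
    {f : α → F → ℝ} (hf : ∀ x, Measurable fun a => f a x) (x : F) :
    Measurable fun a => gradientLim b (f a) x :=
  Finset.measurable_sum _ fun _ _ => (measurable_dirDerivLim hf _ _).smul_const _

theorem measurable_fderivLim [FiniteDimensional ℝ F] [FiniteDimensional ℝ G] [MeasurableSpace G]
    [BorelSpace G] {g : α → F → G} (hg : ∀ x, Measurable fun a => g a x) (x : F) :
    Measurable fun a => fderivLim b (g a) x :=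
  Finset.measurable_sum _ fun i _ =>
    (ContinuousLinearMap.smulRightL ℝ F G (innerSL ℝ (b i))).measurable.comp
      (measurable_dirDerivLim hg _ _)

end OrthonormalBasis

section Gradient

variable {F : Type*} [NormedAddCommGroup F] [InnerProductSpace ℝ F] [CompleteSpace F]

theorem gradient_const_smul (c : ℝ) (f : F → ℝ) : gradient (c • f) = c • gradient f := by
  funext x
  simp [gradient, fderiv_const_smul_field]

theorem gradient_sum {ι : Type*} (t : Finset ι) {f : ι → F → ℝ} {x : F}
    (hf : ∀ i ∈ t, DifferentiableAt ℝ (f i) x) :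
    gradient (fun y => ∑ i ∈ t, f i y) x = ∑ i ∈ t, gradient (f i) x := by
  simp [gradient, fderiv_fun_sum hf]

theorem ContDiff.gradient {m n : WithTop ℕ∞} {f : F → ℝ} (hf : ContDiff ℝ n f)
    (hmn : m + 1 ≤ n) : ContDiff ℝ m (gradient f) :=
  (InnerProductSpace.toDual ℝ F).symm.contDiff.comp (hf.fderiv_right hmn)

end Gradient

section Hessian

variable {k : ℕ}

local notation "E" => EuclideanSpace ℝ (Fin k)

theorem hess_div_const (f : E → ℝ) (c : ℝ) (h : E) :
    hess (fun x => f x / c) h = c⁻¹ • hess f h := by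
  have hf : (fun x => f x / c) = c⁻¹ • f := by
    funext x
    simp [div_eq_inv_mul]
  simp only [hess, hf, gradient_const_smul, fderiv_const_smul_field]
  rfl

theorem hess_sum {ι : Type*} (t : Finset ι) {f : ι → E → ℝ}
    (hf : ∀ i ∈ t, ContDiff ℝ 2 (f i)) (h : E) :
    hess (fun x => ∑ i ∈ t, f i x) h = ∑ i ∈ t, hess (f i) h := by
  have hgrad : gradient (fun x => ∑ i ∈ t, f i x) = fun x => ∑ i ∈ t, gradient (f i) x :=
    funext fun _ => gradient_sum t fun i hi =>
      ((hf i hi).differentiable two_ne_zero).differentiableAt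
  simp only [hess, hgrad]
  exact fderiv_fun_sum fun i hi =>
    (((hf i hi).gradient (m := 1) (by norm_num)).differentiable one_ne_zero).differentiableAt

theorem continuous_hess {f : E → ℝ} (hf : ContDiff ℝ 2 f) : Continuous (hess f) :=
  (hf.gradient (m := 1) (by norm_num)).continuous_fderiv one_ne_zero

theorem fderivLim_gradientLim_eq_hess {ι : Type*} [Fintype ι] (b : OrthonormalBasis ι ℝ E)
    {f : E → ℝ} (hf : ContDiff ℝ 2 f) (h : E) :
    fderivLim b (gradientLim b f) h = hess f h := by
  rw [gradientLim_eq b (hf.differentiable two_ne_zero),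
    fderivLim_eq b (((hf.gradient (m := 1) (by norm_num)).differentiable one_ne_zero) h)]
  rfl

end Hessian

theorem exists_measurable_continuousMap_eq {α X Y : Type*} [MeasurableSpace α]
    [MetricSpace X] [CompactSpace X] [MetricSpace Y] [CompleteSpace Y] [SecondCountableTopology Y]
    [Nonempty Y] [MeasurableSpace Y] [BorelSpace Y] [MeasurableSpace C(X, Y)] [BorelSpace C(X, Y)]
    (F : α → X → Y) (hF : ∀ x, Measurable fun a => F a x) :
    ∃ Γ : α → C(X, Y), Measurable Γ ∧ ∀ a, Continuous (F a) → ⇑(Γ a) = F a := by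
  obtain ⟨D, hD_countable, hD_dense⟩ := TopologicalSpace.exists_countable_dense X
  have : Countable D := hD_countable.to_subtype
  let restrict : C(X, Y) → (D → Y) := fun g d => g d
  have restrict_injective : Function.Injective restrict := fun g₁ g₂ hg =>
    ContinuousMap.ext fun x => congrFun
      (Continuous.ext_on hD_dense g₁.continuous g₂.continuous fun d hd => congrFun hg ⟨d, hd⟩) x
  -- `C(X, Y)` is Polish, so the continuous injection `restrict` is a measurable embedding.
  have restrict_embedding : MeasurableEmbedding restrict :=
    (continuous_pi fun d => continuous_eval_const _).measurableEmbedding restrict_injective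
  refine ⟨fun a => Function.extend restrict id (fun _ => .const X (Classical.arbitrary Y))
    (fun d => F a d), (restrict_embedding.measurable_extend measurable_id measurable_const).comp
      (measurable_pi_lambda _ fun d => hF d), fun a ha => ?_⟩
  change ⇑(Function.extend restrict id _ (restrict ⟨F a, ha⟩)) = F a
  rw [restrict_injective.extend_apply]
  rfl

theorem exists_measurable_hess_continuousMap {k : ℕ} (H : Set (EuclideanSpace ℝ (Fin k)))
    [CompactSpace H]
    [MeasurableSpace C(H, EuclideanSpace ℝ (Fin k) →L[ℝ] EuclideanSpace ℝ (Fin k))]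
    [BorelSpace C(H, EuclideanSpace ℝ (Fin k) →L[ℝ] EuclideanSpace ℝ (Fin k))] :
    ∃ Γ : (EuclideanSpace ℝ (Fin k) → ℝ) →
        C(H, EuclideanSpace ℝ (Fin k) →L[ℝ] EuclideanSpace ℝ (Fin k)),
      Measurable Γ ∧ ∀ f, ContDiff ℝ 2 f → ∀ h : H, Γ f h = hess f h := by
  let b := EuclideanSpace.basisFun (Fin k) ℝ
  obtain ⟨Γ, hΓ_meas, hΓ_eq⟩ := exists_measurable_continuousMap_eq
    (fun f (h : H) => fderivLim b (gradientLim b f) h)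
    (fun h => measurable_fderivLim b (measurable_gradientLim b measurable_pi_apply) h)
  refine ⟨Γ, hΓ_meas, fun f hf h => ?_⟩
  have hlim : (fun h : H => fderivLim b (gradientLim b f) h) = fun h : H => hess f h :=
    funext fun h => fderivLim_gradientLim_eq_hess b hf h
  rw [hΓ_eq f (by rw [hlim]; exact (continuous_hess hf).comp continuous_subtype_val), hlim]

theorem ae_tendsto_inv_sum_smul_sum_s18 {Ω B : Type*} [MeasurableSpace Ω] {μ : Measure Ω}
    [NormedAddCommGroup B] [NormedSpace ℝ B] [CompleteSpace B] [MeasurableSpace B] [BorelSpace B]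
    (X : ℕ → Ω → B) (hX_int : Integrable (X 0) μ)
    (hX_indep : Pairwise fun i j => IndepFun (X i) (X j) μ)
    (hX_ident : ∀ i, IdentDistrib (X i) (X 0) μ μ)
    (Y : ℕ → Ω → ℝ) (hY_int : Integrable (Y 0) μ)
    (hY_indep : Pairwise fun i j => IndepFun (Y i) (Y j) μ)
    (hY_ident : ∀ i, IdentDistrib (Y i) (Y 0) μ μ) (hY_mean : μ[Y 0] ≠ 0) :
    ∀ᵐ ω ∂μ, Tendsto (fun n : ℕ => (∑ i ∈ Finset.range n, Y i ω)⁻¹ • ∑ i ∈ Finset.range n, X i ω)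
      atTop (𝓝 ((μ[Y 0])⁻¹ • μ[X 0])) := by
  filter_upwards [strong_law_ae X hX_int hX_indep hX_ident,
    strong_law_ae_real Y hY_int hY_indep hY_ident] with ω hX hY
  refine ((hY.inv₀ hY_mean).smul hX).congr' ?_
  filter_upwards [eventually_ne_atTop 0] with n hn
  rw [smul_smul, div_eq_mul_inv, mul_inv, inv_inv, mul_assoc,
    mul_inv_cancel₀ (Nat.cast_ne_zero.mpr hn), mul_one]

theorem ae_tendsto_iSup_norm_inv_sum_smul_sum_sub {Ω X Y : Type*} [MeasurableSpace Ω]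
    {μ : Measure Ω} [MetricSpace X] [CompactSpace X]
    [NormedAddCommGroup Y] [NormedSpace ℝ Y] [CompleteSpace Y] [SecondCountableTopology Y]
    [MeasurableSpace C(X, Y)] [BorelSpace C(X, Y)]
    (W : ℕ → Ω → C(X, Y)) (hW_int : Integrable (fun ω => ⨆ x, ‖W 0 ω x‖) μ)
    (hW_indep : Pairwise fun i j => IndepFun (W i) (W j) μ)
    (hW_ident : ∀ i, IdentDistrib (W i) (W 0) μ μ)
    (Z : ℕ → Ω → ℝ) (hZ_int : Integrable (Z 0) μ)
    (hZ_indep : Pairwise fun i j => IndepFun (Z i) (Z j) μ)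
    (hZ_ident : ∀ i, IdentDistrib (Z i) (Z 0) μ μ) (hZ_mean : μ[Z 0] ≠ 0) :
    ∀ᵐ ω ∂μ, Tendsto (fun n : ℕ => ⨆ x, ‖(∑ i ∈ Finset.range n, Z i ω)⁻¹ •
        ∑ i ∈ Finset.range n, W i ω x - (μ[Z 0])⁻¹ • ∫ ω', W 0 ω' x ∂μ‖) atTop (𝓝 0) := by
  have hW0_int : Integrable (W 0) μ :=
    hW_int.mono' (hW_ident 0).aemeasurable_fst.aestronglyMeasurable
      (ae_of_all _ fun ω => (ContinuousMap.norm_eq_iSup_norm _).le)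
  filter_upwards [ae_tendsto_inv_sum_smul_sum_s18 W hW0_int hW_indep hW_ident Z hZ_int hZ_indep
    hZ_ident hZ_mean] with ω hω
  refine (tendsto_iff_norm_sub_tendsto_zero.mp hω).congr fun n => ?_
  simp [ContinuousMap.norm_eq_iSup_norm, ContinuousMap.integral_apply hW0_int]

end

theorem stmt18_general {k : ℕ} (H : Set (EuclideanSpace ℝ (Fin k))) (hH : IsCompact H)
    {Ω : Type*} [MeasurableSpace Ω] (μ : Measure Ω) [IsProbabilityMeasure μ]
    (N : ℕ → Ω → ℕ) (S : ℕ → Ω → EuclideanSpace ℝ (Fin k) → ℝ)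
    (hN_pos : ∀ r ω, 1 ≤ N r ω)
    (hN_int : Integrable (fun ω => (N 0 ω : ℝ)) μ)
    (hiid_indep : iIndepFun (fun r ω => (N r ω, S r ω)) μ)
    (hiid_ident : ∀ r, IdentDistrib (fun ω => (N r ω, S r ω)) (fun ω => (N 0 ω, S 0 ω)) μ μ)
    (hsmooth : ∀ r, ∀ᵐ ω ∂μ, ContDiff ℝ 2 (S r ω))
    (hsupHess_int : ∀ r, Integrable (fun ω => ⨆ h : H, ‖hess (S r ω) h‖) μ)
    (hinterchange : ∀ h ∈ H,
      hess (fun x => ∫ ω, S 0 ω x ∂μ) h = ∫ ω, hess (S 0 ω) h ∂μ) :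
    ∀ᵐ ω ∂μ, Tendsto (fun R : ℕ =>
        ⨆ h : H,
          ‖hess (fun x => (∑ r ∈ Finset.range R, S r ω x)
              / (∑ r ∈ Finset.range R, (N r ω : ℝ))) h
            - hess (fun x => (∫ ω', S 0 ω' x ∂μ) / (∫ ω', (N 0 ω' : ℝ) ∂μ)) h‖)
      atTop (𝓝 0) := by
  have : CompactSpace H := isCompact_iff_compactSpace.mp hH
  borelize C(H, EuclideanSpace ℝ (Fin k) →L[ℝ] EuclideanSpace ℝ (Fin k))
  obtain ⟨Γ, hΓ_meas, hΓ_hess⟩ := exists_measurable_hess_continuousMap H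
  have hΓ_snd : Measurable fun p : ℕ × (EuclideanSpace ℝ (Fin k) → ℝ) => Γ p.2 :=
    hΓ_meas.comp measurable_snd
  have hcast_fst : Measurable fun p : ℕ × (EuclideanSpace ℝ (Fin k) → ℝ) => (p.1 : ℝ) :=
    measurable_from_nat.comp measurable_fst
  have hN_mean : μ[fun ω => (N 0 ω : ℝ)] ≠ 0 := by
    have : (1 : ℝ) ≤ μ[fun ω => (N 0 ω : ℝ)] := by
      simpa using integral_mono (integrable_const 1) hN_int fun ω =>
        Nat.one_le_cast.mpr (hN_pos 0 ω)
    positivity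
  have hW_int : Integrable (fun ω => ⨆ h, ‖Γ (S 0 ω) h‖) μ :=
    (hsupHess_int 0).congr (by filter_upwards [hsmooth 0] with ω hω; simp [hΓ_hess _ hω])
  filter_upwards [ae_tendsto_iSup_norm_inv_sum_smul_sum_sub (fun r ω => Γ (S r ω)) hW_int
      (fun i j hij => (hiid_indep.indepFun hij).comp hΓ_snd hΓ_snd)
      (fun r => (hiid_ident r).comp hΓ_snd)
      (fun r ω => (N r ω : ℝ)) hN_int
      (fun i j hij => (hiid_indep.indepFun hij).comp hcast_fst hcast_fst)
      (fun r => (hiid_ident r).comp hcast_fst) hN_mean,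
    ae_all_iff.2 hsmooth] with ω hlim hω
  refine hlim.congr fun R => iSup_congr fun h => ?_
  have hmean : ∫ ω', Γ (S 0 ω') h ∂μ = hess (fun x => ∫ ω, S 0 ω x ∂μ) h := by
    rw [hinterchange h h.2]
    exact integral_congr_ae (by filter_upwards [hsmooth 0] with ω hω using hΓ_hess _ hω h)
  simp [hess_div_const, hess_sum _ fun r _ => hω r, hmean, hΓ_hess _ (hω _)]

/-- uniform a.s. convergence of Hessians.  For iid tour pairs `(N_r, S_r)`
with `S₁` a.s. twice continuously differentiable, `sup_{h ∈ H} ‖∇²_h S₁(h)‖` integrable, and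
the interchange `∇²_h E S₁(h) = E ∇²_h S₁(h)` valid on `H`:  almost surely
`sup_{h ∈ H} ‖∇² B_R(h) − ∇² B(h)‖ → 0`, where `B_R(h) = ∑_{r≤R} S_r(h) / ∑_{r≤R} N_r` and
`B(h) = E S₁(h) / E N₁`. -/
theorem stmt18 {k : ℕ} (H : Set (EuclideanSpace ℝ (Fin k))) (hH : IsCompact H)
    {Ω : Type*} [MeasurableSpace Ω] (μ : Measure Ω) [IsProbabilityMeasure μ]
    (N : ℕ → Ω → ℕ) (S : ℕ → Ω → EuclideanSpace ℝ (Fin k) → ℝ)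
    (hN_pos : ∀ r ω, 1 ≤ N r ω)
    (hN_int : Integrable (fun ω => (N 0 ω : ℝ)) μ)
    (hiid_indep : iIndepFun (fun r ω => (N r ω, S r ω)) μ)
    (hiid_ident : ∀ r, IdentDistrib (fun ω => (N r ω, S r ω)) (fun ω => (N 0 ω, S 0 ω)) μ μ)
    (hS_int : ∀ h, Integrable (fun ω => S 0 ω h) μ)
    (hsmooth : ∀ r, ∀ᵐ ω ∂μ, ContDiff ℝ 2 (S r ω))
    (hsupHess_meas : ∀ r, Measurable (fun ω => ⨆ h : H, ‖hess (S r ω) h‖))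
    (hsupHess_int : ∀ r, Integrable (fun ω => ⨆ h : H, ‖hess (S r ω) h‖) μ)
    (hinterchange : ∀ h ∈ H,
      hess (fun x => ∫ ω, S 0 ω x ∂μ) h = ∫ ω, hess (S 0 ω) h ∂μ) :
    ∀ᵐ ω ∂μ, Tendsto (fun R : ℕ =>
        ⨆ h : H,
          ‖hess (fun x => (∑ r ∈ Finset.range R, S r ω x)
              / (∑ r ∈ Finset.range R, (N r ω : ℝ))) h
            - hess (fun x => (∫ ω', S 0 ω' x ∂μ) / (∫ ω', (N 0 ω' : ℝ) ∂μ)) h‖)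
      atTop (𝓝 0) :=
  stmt18_general H hH μ N S hN_pos hN_int hiid_indep hiid_ident hsmooth hsupHess_int hinterchange
end
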